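/- arXiv:1910.08393 — 5 statements merged into one kernel-verified Lean document; each statement's English description precedes it below -/
import Mathlib

section
/- The Lagrange interpolation polynomials of type A satisfy the recurrence f_i^{(n)}(a₁,a₂;t;z₁,…,z_n) = (z_n − a₂t^{n−i})/(a₁t^{i−1} − a₂t^{n−i}) · f_{i−1}^{(n−1)}(a₁,a₂;t;z₁,…,z_{n−1}) + (z_n − a₁t^{i})/(a₂t^{n−i−1} − a₁t^{i}) · f_{i}^{(n−1)}(a₁,a₂;t;z₁,…,z_{n−1}) for i = 0,1,…,n, with the conventions f_{-1}^{(n−1)} = 0 and f_{n}^{(n−1)} = 0. -/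
/-!
Split the index sets `I ⊆ {1, …, n}` according to whether `n ∈ I`. Being the largest index, `n`
is the last element of `I` or of its complement; appending it leaves every other factor of the
summand unchanged and contributes one new factor, whose exponents are read off from its position
`#I` (resp. `n - #I`) in the sorted list. Summing over `I ⊆ {1, …, n - 1}` gives the two terms
of the recurrence.
-/

open scoped BigOperators

/-- The k-th element (0-indexed) of a finite set of naturals, listed increasingly. -/
def sortedEl (I : Finset ℕ) (k : ℕ) : ℕ := (I.sort (· ≤ ·)).getD k 0

/-- The Lagrange interpolation polynomial of type A:
f_r(a₁,a₂;t;z) = ∑_{I⊆{1,…,n},|I|=r} ∏_{k=1}^{r}(z_{i_k}−a₂t^{i_k−k})/(a₁t^{k−1}−a₂t^{i_k−k})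
  ∏_{l=1}^{n−r}(z_{j_l}−a₁t^{j_l−l})/(a₂t^{l−1}−a₁t^{j_l−l}),
where I = {i₁<⋯<i_r} and {1,…,n}∖I = {j₁<⋯<j_{n−r}}; z is indexed by 1,…,n. -/
noncomputable def lagrangeF (a₁ a₂ t : ℂ) (n r : ℕ) (z : ℕ → ℂ) : ℂ :=
  ∑ I ∈ Finset.powersetCard r (Finset.Icc 1 n),
    (∏ k ∈ Finset.range r,
        (z (sortedEl I k) - a₂ * t ^ (sortedEl I k - (k + 1))) /
          (a₁ * t ^ k - a₂ * t ^ (sortedEl I k - (k + 1)))) *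
      ∏ l ∈ Finset.range (n - r),
        (z (sortedEl ((Finset.Icc 1 n) \ I) l) -
            a₁ * t ^ (sortedEl ((Finset.Icc 1 n) \ I) l - (l + 1))) /
          (a₂ * t ^ l - a₁ * t ^ (sortedEl ((Finset.Icc 1 n) \ I) l - (l + 1)))

namespace Finset

theorem sort_insert_eq_append {α : Type*} [DecidableEq α] (r : α → α → Prop) [DecidableRel r]
    [IsTrans α r] [Std.Antisymm r] [Std.Total r] {s : Finset α} {a : α}
    (h₁ : ∀ b ∈ s, r b a) (h₂ : a ∉ s) :
    (insert a s).sort r = s.sort r ++ [a] := by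
  have hperm : ((insert a s).sort r).Perm (s.sort r ++ [a]) := by
    rw [← Multiset.coe_eq_coe, sort_eq, insert_val_of_notMem h₂, ← Multiset.coe_add, sort_eq,
      Multiset.coe_singleton, add_comm, Multiset.singleton_add]
  refine hperm.eq_of_pairwise' (pairwise_sort _ _) ?_
  refine List.pairwise_append.mpr ⟨pairwise_sort _ _, List.pairwise_singleton _ _, ?_⟩
  rintro x hx y hy
  exact List.mem_singleton.mp hy ▸ h₁ x ((mem_sort r).mp hx)

end Finset

section sortedEl

variable {s : Finset ℕ} {a : ℕ}

theorem sortedEl_insert_of_lt_card (h : ∀ b ∈ s, b < a) {k : ℕ} (hk : k < s.card) :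
    sortedEl (insert a s) k = sortedEl s k := by
  rw [sortedEl, Finset.sort_insert_eq_append _ (fun b hb => (h b hb).le) (fun ha => (h a ha).false),
    List.getD_append _ _ _ _ (by rwa [Finset.length_sort])]
  rfl

theorem sortedEl_insert_card (h : ∀ b ∈ s, b < a) : sortedEl (insert a s) s.card = a := by
  rw [sortedEl, Finset.sort_insert_eq_append _ (fun b hb => (h b hb).le) (fun ha => (h a ha).false),
    List.getD_append_right _ _ _ _ (by simp)]
  simp

end sortedEl

open Finset

/-- Both products in `lagrangeF` are of this form, the second one with `a₁` and `a₂` swapped. -/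
noncomputable def lagrangeFactor (a b t : ℂ) (z : ℕ → ℂ) (S : Finset ℕ) : ℂ :=
  ∏ k ∈ range #S,
    (z (sortedEl S k) - b * t ^ (sortedEl S k - (k + 1))) /
      (a * t ^ k - b * t ^ (sortedEl S k - (k + 1)))

theorem lagrangeFactor_insert_of_forall_lt (a b t : ℂ) (z : ℕ → ℂ) {S : Finset ℕ} {c : ℕ}
    (h : ∀ x ∈ S, x < c) :
    lagrangeFactor a b t z (insert c S) =
      (z c - b * t ^ (c - (#S + 1))) / (a * t ^ #S - b * t ^ (c - (#S + 1))) *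
        lagrangeFactor a b t z S := by
  have hfactor : ∀ k ∈ range #S,
      (z (sortedEl (insert c S) k) - b * t ^ (sortedEl (insert c S) k - (k + 1))) /
          (a * t ^ k - b * t ^ (sortedEl (insert c S) k - (k + 1))) =
        (z (sortedEl S k) - b * t ^ (sortedEl S k - (k + 1))) /
          (a * t ^ k - b * t ^ (sortedEl S k - (k + 1))) := fun k hk => by
    rw [sortedEl_insert_of_lt_card h (mem_range.mp hk)]
  rw [lagrangeFactor, card_insert_of_notMem (fun hc => (h c hc).false), prod_range_succ,
    prod_congr rfl hfactor, sortedEl_insert_card h, mul_comm, lagrangeFactor]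

noncomputable def lagrangeSummand (a₁ a₂ t : ℂ) (n : ℕ) (z : ℕ → ℂ) (I : Finset ℕ) : ℂ :=
  lagrangeFactor a₁ a₂ t z I * lagrangeFactor a₂ a₁ t z (Icc 1 n \ I)

theorem lagrangeF_eq_sum_lagrangeSummand (a₁ a₂ t : ℂ) (n r : ℕ) (z : ℕ → ℂ) :
    lagrangeF a₁ a₂ t n r z = ∑ I ∈ powersetCard r (Icc 1 n), lagrangeSummand a₁ a₂ t n z I := by
  refine sum_congr rfl fun I hI => ?_
  obtain ⟨hsub, rfl⟩ := mem_powersetCard.mp hI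
  rw [lagrangeSummand, lagrangeFactor, lagrangeFactor, card_sdiff_of_subset hsub, Nat.card_Icc,
    Nat.add_sub_cancel]

theorem lagrangeF_eq_zero_of_lt (a₁ a₂ t : ℂ) (z : ℕ → ℂ) {n r : ℕ} (h : n < r) :
    lagrangeF a₁ a₂ t n r z = 0 := by
  rw [lagrangeF, powersetCard_eq_empty.mpr (by simpa using h), sum_empty]

theorem Icc_one_succ_eq_insert (m : ℕ) : Icc 1 (m + 1) = insert (m + 1) (Icc 1 m) :=
  (insert_Icc_right_eq_Icc_add_one (by omega)).symm

section succ

variable (a₁ a₂ t : ℂ) (z : ℕ → ℂ) {m : ℕ}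

theorem lagrangeSummand_succ_of_subset {I : Finset ℕ} (hI : I ⊆ Icc 1 m) :
    lagrangeSummand a₁ a₂ t (m + 1) z I =
      (z (m + 1) - a₁ * t ^ (#I : ℤ)) / (a₂ * t ^ ((m : ℤ) - #I) - a₁ * t ^ (#I : ℤ)) *
        lagrangeSummand a₁ a₂ t m z I := by
  have hle : ∀ x ∈ Icc 1 m \ I, x < m + 1 := fun x hx =>
    Nat.lt_succ_of_le (mem_Icc.mp (mem_sdiff.mp hx).1).2
  have hcard : #(Icc 1 m \ I) = m - #I := by
    rw [card_sdiff_of_subset hI, Nat.card_Icc, Nat.add_sub_cancel]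
  have hIm : #I ≤ m := by simpa using card_le_card hI
  have hexp : m + 1 - (m - #I + 1) = #I := by omega
  rw [lagrangeSummand, Icc_one_succ_eq_insert,
    insert_sdiff_of_notMem _ (fun h => by simpa using hI h),
    lagrangeFactor_insert_of_forall_lt _ _ _ _ hle, hcard, hexp, lagrangeSummand,
    ← Nat.cast_sub hIm, zpow_natCast, zpow_natCast]
  ring

theorem lagrangeSummand_succ_insert {I : Finset ℕ} (hI : I ⊆ Icc 1 m) :
    lagrangeSummand a₁ a₂ t (m + 1) z (insert (m + 1) I) =
      (z (m + 1) - a₂ * t ^ ((m : ℤ) - #I)) / (a₁ * t ^ (#I : ℤ) - a₂ * t ^ ((m : ℤ) - #I)) *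
        lagrangeSummand a₁ a₂ t m z I := by
  have hle : ∀ x ∈ I, x < m + 1 := fun x hx => Nat.lt_succ_of_le (mem_Icc.mp (hI hx)).2
  have hIm : #I ≤ m := by simpa using card_le_card hI
  have hexp : m + 1 - (#I + 1) = m - #I := by omega
  rw [lagrangeSummand, Icc_one_succ_eq_insert, insert_sdiff_insert,
    sdiff_insert_of_notMem (by simp), lagrangeFactor_insert_of_forall_lt _ _ _ _ hle, hexp,
    lagrangeSummand, ← Nat.cast_sub hIm, zpow_natCast, zpow_natCast]
  ring

theorem lagrangeF_succ_zero (m : ℕ) :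
    lagrangeF a₁ a₂ t (m + 1) 0 z =
      (z (m + 1) - a₁) / (a₂ * t ^ m - a₁) *
        lagrangeF a₁ a₂ t m 0 z := by
  simpa [lagrangeF_eq_sum_lagrangeSummand] using
    lagrangeSummand_succ_of_subset a₁ a₂ t z (empty_subset (Icc 1 m))

theorem lagrangeF_succ_succ (m j : ℕ) :
    lagrangeF a₁ a₂ t (m + 1) (j + 1) z =
      (z (m + 1) - a₂ * t ^ ((m : ℤ) - j)) / (a₁ * t ^ (j : ℤ) - a₂ * t ^ ((m : ℤ) - j)) *
          lagrangeF a₁ a₂ t m j z +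
        (z (m + 1) - a₁ * t ^ ((j + 1 : ℕ) : ℤ)) /
            (a₂ * t ^ ((m : ℤ) - (j + 1 : ℕ)) - a₁ * t ^ ((j + 1 : ℕ) : ℤ)) *
          lagrangeF a₁ a₂ t m (j + 1) z := by
  have hnotMem : m + 1 ∉ Icc 1 m := by simp
  have hdisj : Disjoint (powersetCard (j + 1) (Icc 1 m))
      ((powersetCard j (Icc 1 m)).image (insert (m + 1))) := by
    simp only [disjoint_left, mem_image, not_exists, not_and]
    exact fun I hI J _ hJI => hnotMem ((mem_powersetCard.mp hI).1 (hJI ▸ mem_insert_self _ _))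
  have hinj : Set.InjOn (insert (m + 1)) (powersetCard j (Icc 1 m) : Set (Finset ℕ)) :=
    fun I hI J hJ hIJ => by
      rw [← erase_insert (fun h => hnotMem ((mem_powersetCard.mp hI).1 h)), hIJ,
        erase_insert (fun h => hnotMem ((mem_powersetCard.mp hJ).1 h))]
  rw [lagrangeF_eq_sum_lagrangeSummand, Icc_one_succ_eq_insert, powersetCard_succ_insert hnotMem,
    sum_union hdisj, sum_image hinj, add_comm, lagrangeF_eq_sum_lagrangeSummand,
    lagrangeF_eq_sum_lagrangeSummand, mul_sum, mul_sum]
  congr 1 <;> refine sum_congr rfl fun I hI => ?_ <;> obtain ⟨hsub, hcard⟩ := mem_powersetCard.mp hI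
  · exact hcard ▸ lagrangeSummand_succ_insert a₁ a₂ t z hsub
  · exact hcard ▸ lagrangeSummand_succ_of_subset a₁ a₂ t z hsub

end succ

theorem lagrange_recurrence_general (n : ℕ) (hn : 1 ≤ n) (i : ℕ) (a₁ a₂ t : ℂ) (z : ℕ → ℂ) :
    lagrangeF a₁ a₂ t n i z =
      (z n - a₂ * t ^ ((n : ℤ) - i)) / (a₁ * t ^ ((i : ℤ) - 1) - a₂ * t ^ ((n : ℤ) - i)) *
          (if i = 0 then 0 else lagrangeF a₁ a₂ t (n - 1) (i - 1) z) +
        (z n - a₁ * t ^ (i : ℤ)) / (a₂ * t ^ ((n : ℤ) - i - 1) - a₁ * t ^ (i : ℤ)) *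
          (if i = n then 0 else lagrangeF a₁ a₂ t (n - 1) i z) := by
  obtain ⟨m, rfl⟩ : ∃ m, n = m + 1 := ⟨n - 1, by omega⟩
  rw [Nat.add_sub_cancel]
  cases i with
  | zero =>
    simp [lagrangeF_succ_zero]
  | succ j =>
    have hexp₁ : ((m + 1 : ℕ) : ℤ) - (j + 1 : ℕ) = m - j := by push_cast; ring
    have hexp₂ : ((j + 1 : ℕ) : ℤ) - 1 = j := by push_cast; ring
    have hexp₃ : (m : ℤ) - j - 1 = m - (j + 1 : ℕ) := by push_cast; ring
    rw [if_neg j.succ_ne_zero, Nat.add_sub_cancel, lagrangeF_succ_succ, hexp₁, hexp₂, hexp₃]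
    split_ifs with hjm
    · obtain rfl : j = m := by omega
      rw [lagrangeF_eq_zero_of_lt a₁ a₂ t z j.lt_succ_self, mul_zero]
    · rfl

/-- Recurrence relation for the Lagrange interpolation polynomials of type A,
with the conventions f_{−1}^{(n−1)} = 0 and f_n^{(n−1)} = 0. -/
theorem lagrange_recurrence (n : ℕ) (hn : 1 ≤ n) (i : ℕ) (hi : i ≤ n) (a₁ a₂ t : ℂ)
    (ha₁ : a₁ ≠ 0) (ha₂ : a₂ ≠ 0) (ht : t ≠ 0)
    (hgen : ∀ k l : ℤ, a₁ * t ^ k ≠ a₂ * t ^ l) (z : ℕ → ℂ) :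
    lagrangeF a₁ a₂ t n i z =
      (z n - a₂ * t ^ ((n : ℤ) - i)) / (a₁ * t ^ ((i : ℤ) - 1) - a₂ * t ^ ((n : ℤ) - i)) *
          (if i = 0 then 0 else lagrangeF a₁ a₂ t (n - 1) (i - 1) z) +
        (z n - a₁ * t ^ (i : ℤ)) / (a₂ * t ^ ((n : ℤ) - i - 1) - a₁ * t ^ (i : ℤ)) *
          (if i = n then 0 else lagrangeF a₁ a₂ t (n - 1) i z) :=
  lagrange_recurrence_general n hn i a₁ a₂ t z
end

section
/- Define ξ_j(a₁,a₂;t) = (a₁, a₁t, …, a₁t^{j−1}, a₂, a₂t, …, a₂t^{n−j−1}) ∈ (ℂ*)^n. Then the Lagrange interpolation polynomials of type A satisfy f_i(a₁,a₂;t; ξ_j(a₁,a₂;t)) = δ_{ij} for all 0 ≤ i,j ≤ n. -/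
open scoped BigOperators

/-- The point ξ_j(a₁,a₂;t) = (a₁, a₁t, …, a₁t^{j−1}, a₂, a₂t, …, a₂t^{n−j−1}),
indexed by 1,…,n. -/
noncomputable def xiNode (a₁ a₂ t : ℂ) (j : ℕ) : ℕ → ℂ :=
  fun k => if k ≤ j then a₁ * t ^ (k - 1) else a₂ * t ^ (k - j - 1)

/-!
If `i > j`, the `(j+1)`-st element `s` of `I` exceeds `j`, so the node there is `a₂ t^{s-j-1}`, which
kills a numerator of the first product. If `i ≤ j` and `I ≠ {1, …, j}`, the least element `c` of the
complement is at most `j`, so the node there is `a₁ t^{c-1}`, killing a numerator of the second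
product. For `I = {1, …, j}` every factor is `1`.
-/

open Finset

section SortedEl

lemma sortedEl_eq_orderEmbOfFin (I : Finset ℕ) (k : Fin #I) :
    sortedEl I k = I.orderEmbOfFin rfl k := by
  rw [sortedEl, List.getD_eq_getElem _ _ (by simp), orderEmbOfFin_apply, Fin.getElem_fin]

lemma sortedEl_mem {I : Finset ℕ} {k : ℕ} (hk : k < #I) : sortedEl I k ∈ I := by
  simpa only [sortedEl_eq_orderEmbOfFin I ⟨k, hk⟩] using orderEmbOfFin_mem I rfl ⟨k, hk⟩

lemma sortedEl_lt_sortedEl {I : Finset ℕ} {k m : ℕ} (hkm : k < m) (hm : m < #I) :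
    sortedEl I k < sortedEl I m := by
  have hk : k < #I := hkm.trans hm
  rw [sortedEl_eq_orderEmbOfFin I ⟨k, hk⟩, sortedEl_eq_orderEmbOfFin I ⟨m, hm⟩]
  exact (I.orderEmbOfFin rfl).strictMono (show (⟨k, hk⟩ : Fin #I) < ⟨m, hm⟩ from hkm)

lemma add_one_le_sortedEl {I : Finset ℕ} (hI : 0 ∉ I) {k : ℕ} (hk : k < #I) :
    k + 1 ≤ sortedEl I k := by
  induction k with
  | zero => exact Nat.pos_of_ne_zero fun h => hI (h ▸ sortedEl_mem hk)
  | succ k ih => exact (ih (by omega)).trans_lt (sortedEl_lt_sortedEl k.lt_succ_self hk)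

lemma sortedEl_zero_le {I : Finset ℕ} {x : ℕ} (hx : x ∈ I) : sortedEl I 0 ≤ x := by
  have hI : 0 < #I := card_pos.2 ⟨x, hx⟩
  rw [sortedEl_eq_orderEmbOfFin I ⟨0, hI⟩, orderEmbOfFin_zero rfl hI]
  exact min'_le I x hx

lemma sortedEl_Icc {a b k : ℕ} (hk : k < b + 1 - a) : sortedEl (Icc a b) k = a + k := by
  have hcard : #(Icc a b) = b + 1 - a := Nat.card_Icc a b
  have hIcc : (fun m : Fin #(Icc a b) => a + (m : ℕ)) = (Icc a b).orderEmbOfFin rfl :=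
    orderEmbOfFin_unique rfl (fun m => mem_Icc.2 ⟨by omega, by omega⟩)
      fun m m' h => by simpa using h
  have := congrFun hIcc ⟨k, hcard ▸ hk⟩
  rw [sortedEl_eq_orderEmbOfFin (Icc a b) ⟨k, hcard ▸ hk⟩, ← this]

end SortedEl

section LagrangeProd

/-- Both products in `lagrangeF` are instances of this one, with `(b₁, b₂) = (a₁, a₂)` over `I`
and `(b₁, b₂) = (a₂, a₁)` over the complement `{1, …, n} \ I`. -/
noncomputable def lagrangeProd (b₁ b₂ t : ℂ) (r : ℕ) (z : ℕ → ℂ) (I : Finset ℕ) : ℂ :=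
  ∏ k ∈ range r,
    (z (sortedEl I k) - b₂ * t ^ (sortedEl I k - (k + 1))) /
      (b₁ * t ^ k - b₂ * t ^ (sortedEl I k - (k + 1)))

lemma lagrangeF_eq_sum (a₁ a₂ t : ℂ) (n r : ℕ) (z : ℕ → ℂ) :
    lagrangeF a₁ a₂ t n r z = ∑ I ∈ powersetCard r (Icc 1 n),
      lagrangeProd a₁ a₂ t r z I * lagrangeProd a₂ a₁ t (n - r) z (Icc 1 n \ I) :=
  rfl

variable {b₁ b₂ t : ℂ} {r : ℕ} {z : ℕ → ℂ} {I : Finset ℕ}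

lemma lagrangeProd_eq_zero {k : ℕ} (hk : k < r)
    (hz : z (sortedEl I k) = b₂ * t ^ (sortedEl I k - (k + 1))) :
    lagrangeProd b₁ b₂ t r z I = 0 :=
  prod_eq_zero (mem_range.2 hk) (by rw [hz, sub_self, zero_div])

lemma lagrangeProd_eq_one (hz : ∀ k < r, z (sortedEl I k) = b₁ * t ^ k)
    (hne : ∀ k < r, b₁ * t ^ k ≠ b₂ * t ^ (sortedEl I k - (k + 1))) :
    lagrangeProd b₁ b₂ t r z I = 1 :=
  prod_eq_one fun k hk => by
    rw [mem_range] at hk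
    rw [hz k hk, div_self (sub_ne_zero.2 (hne k hk))]

end LagrangeProd

section XiNode

variable {a₁ a₂ t : ℂ} {j : ℕ}

lemma xiNode_of_le {k : ℕ} (hk : k ≤ j) : xiNode a₁ a₂ t j k = a₁ * t ^ (k - 1) :=
  if_pos hk

lemma xiNode_of_lt {k : ℕ} (hk : j < k) : xiNode a₁ a₂ t j k = a₂ * t ^ (k - j - 1) :=
  if_neg (Nat.not_le.2 hk)

lemma lagrangeProd_xiNode_eq_zero_of_lt {r : ℕ} {I : Finset ℕ} (hI : 0 ∉ I) (hjr : j < r)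
    (hrI : r ≤ #I) : lagrangeProd a₁ a₂ t r (xiNode a₁ a₂ t j) I = 0 := by
  refine lagrangeProd_eq_zero hjr ?_
  rw [xiNode_of_lt (add_one_le_sortedEl hI (by omega)), Nat.sub_sub]

lemma lagrangeProd_xiNode_eq_zero_of_mem {r m : ℕ} {J : Finset ℕ} (hr : 0 < r) (hm : m ∈ J)
    (hmj : m ≤ j) : lagrangeProd a₂ a₁ t r (xiNode a₁ a₂ t j) J = 0 :=
  lagrangeProd_eq_zero hr (xiNode_of_le ((sortedEl_zero_le hm).trans hmj))

lemma lagrangeProd_xiNode_Icc_one (hgen : ∀ k l : ℕ, a₁ * t ^ k ≠ a₂ * t ^ l) :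
    lagrangeProd a₁ a₂ t j (xiNode a₁ a₂ t j) (Icc 1 j) = 1 := by
  refine lagrangeProd_eq_one (fun k hk => ?_) (fun k hk => ?_) <;>
    rw [sortedEl_Icc (by omega)]
  · rw [xiNode_of_le (by omega), Nat.add_sub_cancel_left]
  · rw [show 1 + k - (k + 1) = 0 by omega]
    exact hgen k 0

lemma lagrangeProd_xiNode_Icc_succ (hgen : ∀ k l : ℕ, a₁ * t ^ k ≠ a₂ * t ^ l) (n : ℕ) :
    lagrangeProd a₂ a₁ t (n - j) (xiNode a₁ a₂ t j) (Icc (j + 1) n) = 1 := by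
  refine lagrangeProd_eq_one (fun l hl => ?_) (fun l hl => ?_) <;>
    rw [sortedEl_Icc (by omega)]
  · rw [xiNode_of_lt (by omega), show j + 1 + l - j - 1 = l by omega]
  · rw [show j + 1 + l - (l + 1) = j by omega]
    exact (hgen j l).symm

end XiNode

lemma exists_mem_Icc_notMem_of_ne {I : Finset ℕ} {j : ℕ} (hI : #I ≤ j) (hne : I ≠ Icc 1 j) :
    ∃ m ∈ Icc 1 j, m ∉ I := by
  by_contra! h
  exact hne (eq_of_subset_of_card_le h (by rw [Nat.card_Icc]; omega)).symm

lemma lagrangeSummand_xiNode_eq_zero {a₁ a₂ t : ℂ} {n i j : ℕ} (hj : j ≤ n) {I : Finset ℕ}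
    (hI : I ∈ powersetCard i (Icc 1 n)) (hne : I ≠ Icc 1 j) :
    lagrangeProd a₁ a₂ t i (xiNode a₁ a₂ t j) I *
      lagrangeProd a₂ a₁ t (n - i) (xiNode a₁ a₂ t j) (Icc 1 n \ I) = 0 := by
  obtain ⟨hIsub, hIcard⟩ := mem_powersetCard.1 hI
  rcases lt_or_ge j i with hji | hij
  · have h0 : 0 ∉ I := fun h => by simpa using hIsub h
    rw [lagrangeProd_xiNode_eq_zero_of_lt h0 hji hIcard.ge, zero_mul]
  · obtain ⟨m, hm, hmI⟩ := exists_mem_Icc_notMem_of_ne (hIcard.trans_le hij) hne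
    rw [mem_Icc] at hm
    have hmJ : m ∈ Icc 1 n \ I := mem_sdiff.2 ⟨mem_Icc.2 ⟨hm.1, hm.2.trans hj⟩, hmI⟩
    have hJcard : #(Icc 1 n \ I) = n - i := by
      rw [card_sdiff_of_subset hIsub, Nat.card_Icc, hIcard, Nat.add_sub_cancel]
    have hr : 0 < n - i := hJcard ▸ card_pos.2 ⟨m, hmJ⟩
    rw [lagrangeProd_xiNode_eq_zero_of_mem hr hmJ hm.2, mul_zero]

theorem lagrange_delta_general (n i j : ℕ) (hi : i ≤ n) (hj : j ≤ n) (a₁ a₂ t : ℂ)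
    (hgen : ∀ k l : ℕ, a₁ * t ^ k ≠ a₂ * t ^ l) :
    lagrangeF a₁ a₂ t n i (xiNode a₁ a₂ t j) = if i = j then 1 else 0 := by
  rw [lagrangeF_eq_sum]
  split_ifs with hij
  · subst hij
    have hmem : Icc 1 i ∈ powersetCard i (Icc 1 n) :=
      mem_powersetCard.2 ⟨Icc_subset_Icc_right hi, by simp⟩
    have hcompl : Icc 1 n \ Icc 1 i = Icc (i + 1) n := by
      ext x
      simp only [mem_sdiff, mem_Icc]
      omega
    rw [sum_eq_single_of_mem _ hmem fun I hI hne => lagrangeSummand_xiNode_eq_zero hj hI hne,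
      hcompl, lagrangeProd_xiNode_Icc_one hgen, lagrangeProd_xiNode_Icc_succ hgen, mul_one]
  · refine sum_eq_zero fun I hI => lagrangeSummand_xiNode_eq_zero hj hI fun hIj => hij ?_
    rw [← (mem_powersetCard.1 hI).2, hIj, Nat.card_Icc, Nat.add_sub_cancel]

/-- Kronecker-delta property: f_i(a₁,a₂;t;ξ_j(a₁,a₂;t)) = δ_{ij}. -/
theorem lagrange_delta (n i j : ℕ) (hi : i ≤ n) (hj : j ≤ n) (a₁ a₂ t : ℂ)
    (ha₁ : a₁ ≠ 0) (ha₂ : a₂ ≠ 0) (ht : t ≠ 0)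
    (hgen : ∀ k l : ℕ, a₁ * t ^ k ≠ a₂ * t ^ l)
    (hroot : ∀ k l : ℕ, k ≠ l → t ^ k ≠ t ^ l) :
    lagrangeF a₁ a₂ t n i (xiNode a₁ a₂ t j) = if i = j then 1 else 0 :=
  lagrange_delta_general n i j hi hj a₁ a₂ t hgen
end

section
/- For generic a₁, a₂, b₁, b₂, t ∈ ℂ*, the following scalar identity of rational functions holds, for all integers i, j with 0 ≤ j ≤ n and i arbitrary: (1−xb₂t^i)(1−t^{i−j+1})/(a₂b₂t^i(1−t^{i+1})) + (1−a₂^{-1}b₂^{-1}t^{-i}) = (1−a₂^{-1}b₂^{-1}t^{-(j−1)})(1−t^j)(1−xb₂t^i)/((1−xb₂t^{j−1})(1−t^{i+1})) + (1−a₂^{-1}x)(1−xb₂t^{-1})(1−t^{i−j+1}) t^j /((1−xb₂t^{j−1})(1−t^{i+1})), as rational functions in x. -/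
/-!
Writing `T = t ^ i` and `S = t ^ j`, every integer power in the identity is a Laurent monomial in
`t`, `T`, `S`, so the identity is one between rational functions of `a₂, b₂, t, x, T, S`, checked by
clearing denominators.
-/

theorem three_term_rational_identity {K : Type*} [Field K] {a b t x T S : K}
    (ha : a ≠ 0) (hb : b ≠ 0) (ht : t ≠ 0) (hT : T ≠ 0) (hS : S ≠ 0)
    (h1 : 1 - T * t ≠ 0) (h2 : 1 - x * b * (S / t) ≠ 0) :
    (1 - x * b * T) * (1 - T / S * t) / (a * b * T * (1 - T * t)) + (1 - a⁻¹ * b⁻¹ * T⁻¹) =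
      (1 - a⁻¹ * b⁻¹ * (t / S)) * (1 - S) * (1 - x * b * T) /
          ((1 - x * b * (S / t)) * (1 - T * t)) +
        (1 - a⁻¹ * x) * (1 - x * b * t⁻¹) * (1 - T / S * t) * S /
          ((1 - x * b * (S / t)) * (1 - T * t)) := by
  have h2' : t - x * b * S ≠ 0 := by
    contrapose! h2
    field_simp
    linear_combination h2
  field_simp
  ring

theorem three_term_scalar_identity_one_general (i : ℤ) (j : ℕ)
    (a₂ b₂ t x : ℂ) (ha : a₂ ≠ 0) (hb : b₂ ≠ 0) (ht : t ≠ 0)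
    (h1 : 1 - t ^ (i + 1) ≠ 0) (h2 : 1 - x * b₂ * t ^ ((j : ℤ) - 1) ≠ 0) :
    (1 - x * b₂ * t ^ i) * (1 - t ^ (i - (j : ℤ) + 1)) / (a₂ * b₂ * t ^ i * (1 - t ^ (i + 1))) +
        (1 - a₂⁻¹ * b₂⁻¹ * t ^ (-i)) =
      (1 - a₂⁻¹ * b₂⁻¹ * t ^ (-((j : ℤ) - 1))) * (1 - t ^ (j : ℤ)) * (1 - x * b₂ * t ^ i) /
          ((1 - x * b₂ * t ^ ((j : ℤ) - 1)) * (1 - t ^ (i + 1))) +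
        (1 - a₂⁻¹ * x) * (1 - x * b₂ * t ^ (-1 : ℤ)) * (1 - t ^ (i - (j : ℤ) + 1)) * t ^ (j : ℤ) /
          ((1 - x * b₂ * t ^ ((j : ℤ) - 1)) * (1 - t ^ (i + 1))) := by
  simp only [zpow_add₀ ht, zpow_sub₀ ht, zpow_neg, zpow_one, inv_div] at h1 h2 ⊢
  exact three_term_rational_identity ha hb ht (zpow_ne_zero i ht) (zpow_ne_zero j ht) h1 h2

/-- Key scalar identity in the proof of the three-term relations (Lemma 5.4). -/
theorem three_term_scalar_identity_one (n : ℕ) (i : ℤ) (j : ℕ) (hj : j ≤ n)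
    (a₂ b₂ t x : ℂ) (ha : a₂ ≠ 0) (hb : b₂ ≠ 0) (ht : t ≠ 0)
    (h1 : 1 - t ^ (i + 1) ≠ 0) (h2 : 1 - x * b₂ * t ^ ((j : ℤ) - 1) ≠ 0) :
    (1 - x * b₂ * t ^ i) * (1 - t ^ (i - (j : ℤ) + 1)) / (a₂ * b₂ * t ^ i * (1 - t ^ (i + 1))) +
        (1 - a₂⁻¹ * b₂⁻¹ * t ^ (-i)) =
      (1 - a₂⁻¹ * b₂⁻¹ * t ^ (-((j : ℤ) - 1))) * (1 - t ^ (j : ℤ)) * (1 - x * b₂ * t ^ i) /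
          ((1 - x * b₂ * t ^ ((j : ℤ) - 1)) * (1 - t ^ (i + 1))) +
        (1 - a₂⁻¹ * x) * (1 - x * b₂ * t ^ (-1 : ℤ)) * (1 - t ^ (i - (j : ℤ) + 1)) * t ^ (j : ℤ) /
          ((1 - x * b₂ * t ^ ((j : ℤ) - 1)) * (1 - t ^ (i + 1))) :=
  three_term_scalar_identity_one_general i j a₂ b₂ t x ha hb ht h1 h2
end

section
/- For generic a, y, b₁, t ∈ ℂ* and integers i < j ≤ n, the scalar identity (1−ab₁t^{n−i−1})/(a t^{j−i−1}) + (1−ya^{-1}t^{-(n−i−1)})(1−t^{-(j−i)})/(y(1−t^{-(n−i)})) = (1−yb₁)(1−ya^{-1}t)(1−t^{-(j−i)})/(y(1−ya^{-1}t^{-(n−j−1)})(1−t^{-(n−i)})) + (1−ab₁t^{n−j−1}) · t(1−ya^{-1}t^{-(n−i−1)})(1−t^{-(n−j)})/(a(1−ya^{-1}t^{-(n−j−1)})(1−t^{-(n−i)})) holds as an identity of rational functions in y. -/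
set_option maxHeartbeats 2000000 in
lemma aux_three_term_two (a y b₁ t u v : ℂ) (ha : a ≠ 0) (hy : y ≠ 0) (ht : t ≠ 0)
    (hu : u ≠ 0) (hv : v ≠ 0)
    (h1 : 1 - y * a⁻¹ * (t / v) ≠ 0) (h2 : 1 - (u * v)⁻¹ ≠ 0) :
    (1 - a * b₁ * (u * v / t)) / (a * (u / t)) +
        (1 - y * a⁻¹ * (t / (u * v))) * (1 - u⁻¹) / (y * (1 - (u * v)⁻¹)) =
      (1 - y * b₁) * (1 - y * a⁻¹ * t) * (1 - u⁻¹) /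
          (y * (1 - y * a⁻¹ * (t / v)) * (1 - (u * v)⁻¹)) +
        (1 - a * b₁ * (v / t)) * t * (1 - y * a⁻¹ * (t / (u * v))) * (1 - v⁻¹) /
          (a * (1 - y * a⁻¹ * (t / v)) * (1 - (u * v)⁻¹)) := by
  have k1 : 1 - y * a⁻¹ * (t / v) = (a * v - y * t) / (a * v) := by field_simp
  have k2 : 1 - (u * v)⁻¹ = (u * v - 1) / (u * v) := by field_simp
  have h1' : a * v - y * t ≠ 0 := by
    intro h; exact h1 (by rw [k1, h, zero_div])
  have h2' : u * v - 1 ≠ 0 := by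
    intro h; exact h2 (by rw [k2, h, zero_div])
  have dL1 : a * (u / t) ≠ 0 := mul_ne_zero ha (div_ne_zero hu ht)
  have dL2 : y * (1 - (u * v)⁻¹) ≠ 0 := mul_ne_zero hy h2
  have dL3 : y * (1 - y * a⁻¹ * (t / v)) * (1 - (u * v)⁻¹) ≠ 0 :=
    mul_ne_zero (mul_ne_zero hy h1) h2
  have dL4 : a * (1 - y * a⁻¹ * (t / v)) * (1 - (u * v)⁻¹) ≠ 0 :=
    mul_ne_zero (mul_ne_zero ha h1) h2
  have dR1 : a * u ≠ 0 := mul_ne_zero ha hu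
  have dR2 : a * u * y * (u * v - 1) ≠ 0 :=
    mul_ne_zero (mul_ne_zero (mul_ne_zero ha hu) hy) h2'
  have dR3 : y * (a * v - y * t) * (u * v - 1) ≠ 0 :=
    mul_ne_zero (mul_ne_zero hy h1') h2'
  have dR4 : a * (a * v - y * t) * (u * v - 1) ≠ 0 :=
    mul_ne_zero (mul_ne_zero ha h1') h2'
  have T1 : (1 - a * b₁ * (u * v / t)) / (a * (u / t)) = (t - a * b₁ * (u * v)) / (a * u) := by
    rw [div_eq_div_iff dL1 dR1]
    field_simp <;> ring
  have T2 : (1 - y * a⁻¹ * (t / (u * v))) * (1 - u⁻¹) / (y * (1 - (u * v)⁻¹)) =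
      (a * u * v - y * t) * (u - 1) / (a * u * y * (u * v - 1)) := by
    rw [div_eq_div_iff dL2 dR2]
    field_simp <;> ring
  have T3 : (1 - y * b₁) * (1 - y * a⁻¹ * t) * (1 - u⁻¹) /
        (y * (1 - y * a⁻¹ * (t / v)) * (1 - (u * v)⁻¹)) =
      (1 - y * b₁) * (a - y * t) * (u - 1) * v ^ 2 / (y * (a * v - y * t) * (u * v - 1)) := by
    rw [div_eq_div_iff dL3 dR3]
    field_simp <;> ring
  have T4 : (1 - a * b₁ * (v / t)) * t * (1 - y * a⁻¹ * (t / (u * v))) * (1 - v⁻¹) /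
        (a * (1 - y * a⁻¹ * (t / v)) * (1 - (u * v)⁻¹)) =
      (t - a * b₁ * v) * (a * u * v - y * t) * (v - 1) / (a * (a * v - y * t) * (u * v - 1)) := by
    rw [div_eq_div_iff dL4 dR4]
    field_simp <;> ring
  rw [T1, T2, T3, T4, div_add_div _ _ dR1 dR2, div_add_div _ _ dR3 dR4,
    div_eq_div_iff (mul_ne_zero dR1 dR2) (mul_ne_zero dR3 dR4)]
  ring

/-- Second key scalar identity in the proof of the three-term relations (Section 5). -/
theorem three_term_scalar_identity_two (n i j : ℕ) (hij : i < j) (hj : j ≤ n)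
    (a y b₁ t : ℂ) (ha : a ≠ 0) (hy : y ≠ 0) (hb : b₁ ≠ 0) (ht : t ≠ 0)
    (h1 : 1 - y * a⁻¹ * t ^ (-((n : ℤ) - (j : ℤ) - 1)) ≠ 0)
    (h2 : 1 - t ^ (-((n : ℤ) - (i : ℤ))) ≠ 0) :
    (1 - a * b₁ * t ^ ((n : ℤ) - i - 1)) / (a * t ^ ((j : ℤ) - i - 1)) +
        (1 - y * a⁻¹ * t ^ (-((n : ℤ) - i - 1))) * (1 - t ^ (-((j : ℤ) - i))) /
          (y * (1 - t ^ (-((n : ℤ) - i)))) =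
      (1 - y * b₁) * (1 - y * a⁻¹ * t) * (1 - t ^ (-((j : ℤ) - i))) /
          (y * (1 - y * a⁻¹ * t ^ (-((n : ℤ) - j - 1))) * (1 - t ^ (-((n : ℤ) - i)))) +
        (1 - a * b₁ * t ^ ((n : ℤ) - j - 1)) * t * (1 - y * a⁻¹ * t ^ (-((n : ℤ) - i - 1))) *
            (1 - t ^ (-((n : ℤ) - j))) /
          (a * (1 - y * a⁻¹ * t ^ (-((n : ℤ) - j - 1))) * (1 - t ^ (-((n : ℤ) - i)))) := by
  set p := j - i with hp
  set q := n - j with hq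
  have E1 : t ^ ((n:ℤ) - i - 1) = t ^ p * t ^ q / t := by
    have h : (n:ℤ) - i - 1 = ((p:ℤ) + q) - 1 := by omega
    rw [h, zpow_sub₀ ht, zpow_add₀ ht, zpow_natCast, zpow_natCast, zpow_one]
  have E2 : t ^ ((j:ℤ) - i - 1) = t ^ p / t := by
    have h : (j:ℤ) - i - 1 = (p:ℤ) - 1 := by omega
    rw [h, zpow_sub₀ ht, zpow_natCast, zpow_one]
  have E3 : t ^ (-((n:ℤ) - i - 1)) = t / (t ^ p * t ^ q) := by
    have h : -((n:ℤ) - i - 1) = 1 - ((p:ℤ) + q) := by omega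
    rw [h, zpow_sub₀ ht, zpow_add₀ ht, zpow_natCast, zpow_natCast, zpow_one]
  have E4 : t ^ (-((j:ℤ) - i)) = (t ^ p)⁻¹ := by
    have h : -((j:ℤ) - i) = -(p:ℤ) := by omega
    rw [h, zpow_neg, zpow_natCast]
  have E5 : t ^ (-((n:ℤ) - i)) = (t ^ p * t ^ q)⁻¹ := by
    have h : -((n:ℤ) - i) = -((p:ℤ) + q) := by omega
    rw [h, zpow_neg, zpow_add₀ ht, zpow_natCast, zpow_natCast]
  have E6 : t ^ (-((n:ℤ) - j - 1)) = t / t ^ q := by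
    have h : -((n:ℤ) - j - 1) = 1 - (q:ℤ) := by omega
    rw [h, zpow_sub₀ ht, zpow_natCast, zpow_one]
  have E7 : t ^ ((n:ℤ) - j - 1) = t ^ q / t := by
    have h : (n:ℤ) - j - 1 = (q:ℤ) - 1 := by omega
    rw [h, zpow_sub₀ ht, zpow_natCast, zpow_one]
  have E8 : t ^ (-((n:ℤ) - j)) = (t ^ q)⁻¹ := by
    have h : -((n:ℤ) - j) = -(q:ℤ) := by omega
    rw [h, zpow_neg, zpow_natCast]
  rw [E6] at h1
  rw [E5] at h2
  rw [E1, E2, E3, E4, E5, E6, E7, E8]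
  exact aux_three_term_two a y b₁ t (t ^ p) (t ^ q) ha hy ht
    (pow_ne_zero _ ht) (pow_ne_zero _ ht) h1 h2
end

section
/- Define the (n+1)×(n+1) diagonal matrix D_R with entries d^R_j = (a₁a₂^{-1}t^{-j};t)_{n−j}(a₂b₁;t)_j / ((a₁b₂;t)_{n−j}(a₁^{-1}a₂t^{-(n−j)};t)_j). Then ∏_{j=0}^{n} d^R_j = (−a₁a₂^{-1})^{C(n+1,2)} ∏_{i=1}^{n} (a₂b₁;t)_i/(a₁b₂;t)_i, where C(n+1,2) = n(n+1)/2. -/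
open scoped BigOperators

/-- The c-shifted factorial (x;c)_k = (1−x)(1−cx)⋯(1−c^{k−1}x). -/
noncomputable def qPoch (x c : ℂ) (k : ℕ) : ℂ :=
  ∏ i ∈ Finset.range k, (1 - c ^ i * x)

/-!
Put `u = a₁ a₂⁻¹`. The factors `(a₂b₁;t)_j` and `(a₁b₂;t)_{n-j}` only need reindexing, so
everything rests on the identity
`∏_j (u t^{-j};t)_{n-j} = (-u)^{C(n+1,2)} ∏_j (u⁻¹ t^{-(n-j)};t)_j`,
proved by induction on `n`. Passing from `n` to `n + 1` multiplies the left side by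
`∏_j (1 - u t^{n-2j})` and the right side by `∏_j (1 - u⁻¹ t^{2j-n})`; these agree up to
`(-u)^{n+1}` because `1 - x = -x (1 - x⁻¹)` termwise, and the resulting powers of `t` cancel
since the exponents `n - 2j` are symmetric about `0`.
-/

open Finset

lemma qPoch_zero (x c : ℂ) : qPoch x c 0 = 1 := prod_range_zero _

lemma qPoch_succ (x c : ℂ) (k : ℕ) :
    qPoch x c (k + 1) = qPoch x c k * (1 - c ^ k * x) :=
  prod_range_succ _ _

lemma prod_range_succ_qPoch (x c : ℂ) (n : ℕ) :
    ∏ j ∈ range (n + 1), qPoch x c j = ∏ i ∈ range n, qPoch x c (i + 1) := by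
  rw [prod_range_succ', qPoch_zero, mul_one]

lemma prod_range_qPoch_sub (x c : ℂ) (n : ℕ) :
    ∏ j ∈ range (n + 1), qPoch x c (n - j) = ∏ j ∈ range (n + 1), qPoch x c j :=
  prod_range_reflect (qPoch x c) (n + 1)

lemma prod_qPoch_length_sub_succ (f : ℕ → ℂ) (c : ℂ) (n : ℕ) :
    ∏ j ∈ range (n + 2), qPoch (f j) c (n + 1 - j) =
      (∏ j ∈ range (n + 1), qPoch (f j) c (n - j)) *
        ∏ j ∈ range (n + 1), (1 - c ^ (n - j) * f j) := by
  rw [prod_range_succ, Nat.sub_self, qPoch_zero, mul_one, ← prod_mul_distrib]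
  refine prod_congr rfl fun j hj => ?_
  rw [Nat.sub_add_comm (mem_range_succ_iff.mp hj), qPoch_succ]

lemma prod_qPoch_base_sub_succ (g : ℕ → ℂ) (c : ℂ) (n : ℕ) :
    ∏ j ∈ range (n + 2), qPoch (g (n + 1 - j)) c j =
      (∏ j ∈ range (n + 1), qPoch (g (n - j)) c j) *
        ∏ j ∈ range (n + 1), (1 - c ^ j * g (n - j)) := by
  rw [prod_range_succ', qPoch_zero, mul_one, ← prod_mul_distrib]
  refine prod_congr rfl fun j _ => ?_
  rw [Nat.add_sub_add_right, qPoch_succ]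

lemma prod_range_pow_sub_mul_inv_pow {t : ℂ} (ht : t ≠ 0) (n : ℕ) :
    ∏ j ∈ range (n + 1), t ^ (n - j) * t⁻¹ ^ j = 1 := by
  rw [prod_mul_distrib, ← prod_range_reflect (t⁻¹ ^ ·) (n + 1), Nat.add_sub_cancel,
    ← prod_mul_distrib]
  exact prod_eq_one fun j _ => by rw [← mul_pow, mul_inv_cancel₀ ht, one_pow]

lemma prod_one_sub_eq_neg_pow_mul_prod_one_sub_inv {u t : ℂ} (hu : u ≠ 0) (ht : t ≠ 0)
    (n : ℕ) :
    ∏ j ∈ range (n + 1), (1 - t ^ (n - j) * (u * t⁻¹ ^ j)) =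
      (-u) ^ (n + 1) * ∏ j ∈ range (n + 1), (1 - t ^ j * (u⁻¹ * t⁻¹ ^ (n - j))) := by
  have hterm : ∀ j, 1 - t ^ (n - j) * (u * t⁻¹ ^ j) =
      -u * (t ^ (n - j) * t⁻¹ ^ j) * (1 - t ^ j * (u⁻¹ * t⁻¹ ^ (n - j))) := by
    intro j
    rw [inv_pow, inv_pow]
    field_simp
    ring
  simp only [hterm, prod_mul_distrib, prod_const, card_range,
    prod_range_pow_sub_mul_inv_pow ht, mul_one]

lemma prod_qPoch_eq_neg_pow_mul_prod_qPoch_inv {u t : ℂ} (hu : u ≠ 0) (ht : t ≠ 0) (n : ℕ) :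
    ∏ j ∈ range (n + 1), qPoch (u * t⁻¹ ^ j) t (n - j) =
      (-u) ^ (n + 1).choose 2 * ∏ j ∈ range (n + 1), qPoch (u⁻¹ * t⁻¹ ^ (n - j)) t j := by
  induction n with
  | zero => simp [qPoch_zero]
  | succ n ih =>
    rw [prod_qPoch_length_sub_succ (fun j => u * t⁻¹ ^ j),
      prod_qPoch_base_sub_succ (fun k => u⁻¹ * t⁻¹ ^ k), ih,
      prod_one_sub_eq_neg_pow_mul_prod_one_sub_inv hu ht, Nat.choose_succ_succ' (n + 1) 1,
      Nat.choose_one_right, pow_add]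
    ring

theorem det_R_matrix_general (n : ℕ) (a₁ a₂ b₁ b₂ t : ℂ)
    (ha₁ : a₁ ≠ 0) (ha₂ : a₂ ≠ 0) (ht : t ≠ 0)
    (hd2 : ∀ j ≤ n, qPoch (a₁⁻¹ * a₂ * (t⁻¹) ^ (n - j)) t j ≠ 0) :
    (∏ j ∈ Finset.range (n + 1),
        qPoch (a₁ * a₂⁻¹ * (t⁻¹) ^ j) t (n - j) * qPoch (a₂ * b₁) t j /
          (qPoch (a₁ * b₂) t (n - j) * qPoch (a₁⁻¹ * a₂ * (t⁻¹) ^ (n - j)) t j)) =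
      (-(a₁ * a₂⁻¹)) ^ (n * (n + 1) / 2) *
        ∏ i ∈ Finset.range n, qPoch (a₂ * b₁) t (i + 1) / qPoch (a₁ * b₂) t (i + 1) := by
  have hu : a₁ * a₂⁻¹ ≠ 0 := mul_ne_zero ha₁ (inv_ne_zero ha₂)
  have hinv : a₁⁻¹ * a₂ = (a₁ * a₂⁻¹)⁻¹ := by rw [mul_inv, inv_inv]
  have hB : ∏ j ∈ range (n + 1), qPoch (a₁⁻¹ * a₂ * t⁻¹ ^ (n - j)) t j ≠ 0 :=
    prod_ne_zero_iff.mpr fun j hj => hd2 j (mem_range_succ_iff.mp hj)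
  have hexp : n * (n + 1) / 2 = (n + 1).choose 2 := by
    rw [Nat.choose_two_right, Nat.add_sub_cancel, Nat.mul_comm]
  rw [prod_div_distrib, prod_mul_distrib, prod_mul_distrib,
    prod_qPoch_eq_neg_pow_mul_prod_qPoch_inv hu ht, ← hinv, prod_range_succ_qPoch,
    prod_range_qPoch_sub, prod_range_succ_qPoch, prod_div_distrib, hexp, mul_right_comm,
    mul_div_mul_right _ _ hB, mul_div_assoc]

/-- The determinant of the R-matrix: product of the diagonal entries of its Gauss
decomposition. -/
theorem det_R_matrix (n : ℕ) (a₁ a₂ b₁ b₂ t : ℂ)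
    (ha₁ : a₁ ≠ 0) (ha₂ : a₂ ≠ 0) (hb₁ : b₁ ≠ 0) (hb₂ : b₂ ≠ 0) (ht : t ≠ 0)
    (hd1 : ∀ j ≤ n, qPoch (a₁ * b₂) t (n - j) ≠ 0)
    (hd2 : ∀ j ≤ n, qPoch (a₁⁻¹ * a₂ * (t⁻¹) ^ (n - j)) t j ≠ 0) :
    (∏ j ∈ Finset.range (n + 1),
        qPoch (a₁ * a₂⁻¹ * (t⁻¹) ^ j) t (n - j) * qPoch (a₂ * b₁) t j /
          (qPoch (a₁ * b₂) t (n - j) * qPoch (a₁⁻¹ * a₂ * (t⁻¹) ^ (n - j)) t j)) =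
      (-(a₁ * a₂⁻¹)) ^ (n * (n + 1) / 2) *
        ∏ i ∈ Finset.range n, qPoch (a₂ * b₁) t (i + 1) / qPoch (a₁ * b₂) t (i + 1) :=
  det_R_matrix_general n a₁ a₂ b₁ b₂ t ha₁ ha₂ ht hd2
end
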